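/- Let θ ∈ (0,1). For every x ∈ (0,1)^N, writing U = 1/(Σ_{i=1}^N x_i), f_i(x) = β b_i(x)(1 − x_i) − δ x_i, and g_i(x) = σ_i(x_i) b_i(x)(1 − x_i), one has: θ (1+U)^{θ−1} ( −U² Σ_{i=1}^N f_i(x) + U³ Σ_{i=1}^N g_i(x)² ) + (1/2) θ (θ−1) (1+U)^{θ−2} U⁴ Σ_{i=1}^N g_i(x)² ≤ θ (1+U)^{θ−2} ( −(β d_min − δ − (M²/32) λ1² (1+θ))·U² − (β d_min − β λ1 − δ − (M²/16) λ1²)·U + β λ1 ). -/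

import Mathlib

/-!
Since `U · Σ xᵢ = 1`, after factoring out `θ (1+U)^(θ-2)` the bracket is bounded linearly, with
nonnegative coefficients (as `θ > -1`), by three graph quantities:
`Σᵢ bᵢ = Σⱼ deg(j) xⱼ ≥ d_min Σ xᵢ` by symmetry of `A`; `x ⬝ Ax ≤ λ₁ |x|² ≤ λ₁ (Σ xᵢ)²` by the
spectral theorem; and `gᵢ² ≤ (M²/16) bᵢ²` because `xᵢ(1-xᵢ) ≤ 1/4`, with `|Ax|² ≤ λ₁² |x|²`
since every eigenvalue `μ` of the nonnegative matrix `A` has `|μ| ≤ λ₁`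
(compare `v ⬝ Av` with `|v| ⬝ A|v|`).
-/

namespace Matrix

namespace IsHermitian

variable {n : Type*} [Fintype n] [DecidableEq n] {A : Matrix n n ℝ} (hA : A.IsHermitian)

lemma sum_dotProduct_eigenvectorBasis_mul (a b : n → ℝ) :
    ∑ i, (a ⬝ᵥ ⇑(hA.eigenvectorBasis i)) * (⇑(hA.eigenvectorBasis i) ⬝ᵥ b) = a ⬝ᵥ b := by
  simpa [EuclideanSpace.inner_eq_star_dotProduct, dotProduct_comm] using
    hA.eigenvectorBasis.sum_inner_mul_inner (WithLp.toLp 2 a) (WithLp.toLp 2 b)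

lemma eigenvectorBasis_dotProduct_mulVec (i : n) (y : n → ℝ) :
    ⇑(hA.eigenvectorBasis i) ⬝ᵥ A *ᵥ y = hA.eigenvalues i * (⇑(hA.eigenvectorBasis i) ⬝ᵥ y) := by
  rw [dotProduct_mulVec, ← mulVec_transpose, (isHermitian_iff_isSymm.mp hA).eq, dotProduct_comm,
    mulVec_eigenvectorBasis, dotProduct_smul, smul_eq_mul, dotProduct_comm]

lemma dotProduct_self_eq_sum (y : n → ℝ) :
    y ⬝ᵥ y = ∑ i, (⇑(hA.eigenvectorBasis i) ⬝ᵥ y) ^ 2 := by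
  rw [← hA.sum_dotProduct_eigenvectorBasis_mul]
  simp only [dotProduct_comm y, sq]

lemma dotProduct_mulVec_eq_sum (y : n → ℝ) :
    y ⬝ᵥ A *ᵥ y = ∑ i, hA.eigenvalues i * (⇑(hA.eigenvectorBasis i) ⬝ᵥ y) ^ 2 := by
  rw [← hA.sum_dotProduct_eigenvectorBasis_mul]
  simp only [dotProduct_comm y, eigenvectorBasis_dotProduct_mulVec]
  exact Finset.sum_congr rfl fun i _ => by ring

lemma mulVec_dotProduct_mulVec_eq_sum (y : n → ℝ) :
    A *ᵥ y ⬝ᵥ A *ᵥ y = ∑ i, hA.eigenvalues i ^ 2 * (⇑(hA.eigenvectorBasis i) ⬝ᵥ y) ^ 2 := by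
  rw [hA.dotProduct_self_eq_sum]
  simp only [eigenvectorBasis_dotProduct_mulVec, mul_pow]

lemma dotProduct_mulVec_le {c : ℝ} (hc : ∀ i, hA.eigenvalues i ≤ c) (y : n → ℝ) :
    y ⬝ᵥ A *ᵥ y ≤ c * (y ⬝ᵥ y) := by
  rw [hA.dotProduct_mulVec_eq_sum, hA.dotProduct_self_eq_sum, Finset.mul_sum]
  gcongr with i
  exact hc i

lemma mulVec_dotProduct_mulVec_le {c : ℝ} (hc : ∀ i, |hA.eigenvalues i| ≤ c) (y : n → ℝ) :
    A *ᵥ y ⬝ᵥ A *ᵥ y ≤ c ^ 2 * (y ⬝ᵥ y) := by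
  rw [hA.mulVec_dotProduct_mulVec_eq_sum, hA.dotProduct_self_eq_sum, Finset.mul_sum]
  gcongr ∑ i, ?_ * _ with i
  exact sq_le_sq' (neg_le_of_abs_le (hc i)) (le_of_abs_le (hc i))

lemma eigenvectorBasis_ne_zero (i : n) : ⇑(hA.eigenvectorBasis i) ≠ 0 :=
  (WithLp.ofLp_eq_zero 2).ne.2 <| hA.eigenvectorBasis.orthonormal.ne_zero i

end IsHermitian

section NonnegEntries

variable {n : Type*} [Fintype n] {A : Matrix n n ℝ}

lemma abs_dotProduct_mulVec_le (hA : ∀ i j, 0 ≤ A i j) (v : n → ℝ) :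
    |v ⬝ᵥ A *ᵥ v| ≤ |v| ⬝ᵥ A *ᵥ |v| := by
  simp only [dotProduct, mulVec, Finset.mul_sum]
  refine (Finset.abs_sum_le_sum_abs _ _).trans (Finset.sum_le_sum fun i _ => ?_)
  refine (Finset.abs_sum_le_sum_abs _ _).trans_eq (Finset.sum_congr rfl fun j _ => ?_)
  simp [abs_mul, abs_of_nonneg (hA i j)]

lemma abs_le_of_mulVec_eq_smul (hA : ∀ i j, 0 ≤ A i j) {c : ℝ}
    (hc : ∀ y, y ⬝ᵥ A *ᵥ y ≤ c * (y ⬝ᵥ y)) {μ : ℝ} {v : n → ℝ} (hv : v ≠ 0)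
    (hAv : A *ᵥ v = μ • v) : |μ| ≤ c := by
  have hvv : 0 < v ⬝ᵥ v := (Fintype.sum_nonneg fun i => mul_self_nonneg (v i)).lt_of_ne
    (Ne.symm (dotProduct_self_eq_zero.not.mpr hv))
  have habs : |v| ⬝ᵥ |v| = v ⬝ᵥ v := by simp [dotProduct, abs_mul_abs_self]
  refine le_of_mul_le_mul_right ?_ hvv
  calc |μ| * (v ⬝ᵥ v) = |v ⬝ᵥ A *ᵥ v| := by
        rw [hAv, dotProduct_smul, smul_eq_mul, abs_mul, abs_of_pos hvv]
    _ ≤ |v| ⬝ᵥ A *ᵥ |v| := abs_dotProduct_mulVec_le hA v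
    _ ≤ c * (v ⬝ᵥ v) := habs ▸ hc |v|

lemma mul_sum_le_sum_mulVec {d : ℝ} (hd : ∀ j, d ≤ ∑ i, A i j) {x : n → ℝ}
    (hx : ∀ j, 0 ≤ x j) : d * ∑ j, x j ≤ ∑ i, (A *ᵥ x) i := by
  simp only [mulVec, dotProduct]
  rw [Finset.sum_comm, Finset.mul_sum]
  gcongr with j
  rw [← Finset.sum_mul]
  exact mul_le_mul_of_nonneg_right (hd j) (hx j)

end NonnegEntries

end Matrix

open Matrix

lemma sq_mul_mul_one_sub_le {s t b M : ℝ} (ht₀ : 0 ≤ t) (ht₁ : t ≤ 1) (hs : |s| ≤ M * t) :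
    (s * b * (1 - t)) ^ 2 ≤ M ^ 2 / 16 * b ^ 2 := by
  have hs2 : s ^ 2 ≤ (M * t) ^ 2 := sq_abs s ▸ pow_le_pow_left₀ (abs_nonneg s) hs 2
  have ht : (t * (1 - t)) ^ 2 ≤ 1 / 16 := by
    nlinarith [sq_nonneg (t - 1 / 2), mul_nonneg ht₀ (sub_nonneg.2 ht₁)]
  calc (s * b * (1 - t)) ^ 2 = s ^ 2 * (1 - t) ^ 2 * b ^ 2 := by ring
    _ ≤ (M * t) ^ 2 * (1 - t) ^ 2 * b ^ 2 := by gcongr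
    _ = M ^ 2 * (t * (1 - t)) ^ 2 * b ^ 2 := by ring
    _ ≤ M ^ 2 * (1 / 16) * b ^ 2 := by gcongr
    _ = M ^ 2 / 16 * b ^ 2 := by ring

section Graph

variable {n : Type*} [Fintype n] {A : Matrix n n ℝ}

lemma dotProduct_self_le_sq_sum {x : n → ℝ} (hx : ∀ i, 0 ≤ x i) : x ⬝ᵥ x ≤ (∑ i, x i) ^ 2 := by
  simpa only [dotProduct, ← sq] using Finset.sum_sq_le_sq_sum_of_nonneg fun i _ => hx i

lemma sum_drift_ge (hA : A.IsSymm) {d l β δ : ℝ} (hd : ∀ i, d ≤ ∑ j, A i j)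
    (hl : ∀ y, y ⬝ᵥ A *ᵥ y ≤ l * (y ⬝ᵥ y)) (hl₀ : 0 ≤ l) (hβ : 0 ≤ β) {x : n → ℝ}
    (hx : ∀ i, 0 ≤ x i) :
    (β * d - δ) * ∑ i, x i - β * l * (∑ i, x i) ^ 2
      ≤ ∑ i, (β * (A *ᵥ x) i * (1 - x i) - δ * x i) := by
  have hcol : ∀ j, d ≤ ∑ i, A i j := fun j =>
    (hd j).trans_eq (Finset.sum_congr rfl fun i _ => hA.apply i j)
  have hdeg : d * ∑ i, x i ≤ ∑ i, (A *ᵥ x) i := mul_sum_le_sum_mulVec hcol hx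
  have hquad : x ⬝ᵥ A *ᵥ x ≤ l * (∑ i, x i) ^ 2 :=
    (hl x).trans (mul_le_mul_of_nonneg_left (dotProduct_self_le_sq_sum hx) hl₀)
  have hsum : ∑ i, (β * (A *ᵥ x) i * (1 - x i) - δ * x i)
      = β * (∑ i, (A *ᵥ x) i - x ⬝ᵥ A *ᵥ x) - δ * ∑ i, x i := by
    simp only [dotProduct, mul_sub, Finset.mul_sum, ← Finset.sum_sub_distrib]
    exact Finset.sum_congr rfl fun i _ => by ring
  rw [hsum]
  nlinarith

lemma sum_sq_diffusion_le [DecidableEq n] (hA : A.IsHermitian) {l M : ℝ}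
    (hl : ∀ i, |hA.eigenvalues i| ≤ l) {s x : n → ℝ} (hx : ∀ i, x i ∈ Set.Icc 0 1)
    (hs : ∀ i, |s i| ≤ M * x i) :
    ∑ i, (s i * (A *ᵥ x) i * (1 - x i)) ^ 2 ≤ M ^ 2 / 16 * l ^ 2 * (∑ i, x i) ^ 2 := calc
  _ ≤ ∑ i, M ^ 2 / 16 * (A *ᵥ x) i ^ 2 :=
      Finset.sum_le_sum fun i _ => sq_mul_mul_one_sub_le (hx i).1 (hx i).2 (hs i)
  _ = M ^ 2 / 16 * (A *ᵥ x ⬝ᵥ A *ᵥ x) := by simp only [dotProduct, Finset.mul_sum, sq]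
  _ ≤ M ^ 2 / 16 * (l ^ 2 * (∑ i, x i) ^ 2) := by
      gcongr
      exact (hA.mulVec_dotProduct_mulVec_le hl x).trans
        (mul_le_mul_of_nonneg_left (dotProduct_self_le_sq_sum fun i => (hx i).1) (sq_nonneg l))
  _ = _ := by ring

end Graph

lemma generator_bracket_le {U S F G β δ d l c θ : ℝ} (hU : 0 ≤ U) (hθ : -1 ≤ θ) (hUS : U * S = 1)
    (hF : (β * d - δ) * S - β * l * S ^ 2 ≤ F) (hG : G ≤ c * S ^ 2) :
    (1 + U) * (-(U ^ 2) * F + U ^ 3 * G) + (θ - 1) / 2 * (U ^ 4 * G)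
      ≤ -(β * d - δ - c / 2 * (1 + θ)) * U ^ 2 - (β * d - β * l - δ - c) * U + β * l := by
  have hF' := mul_le_mul_of_nonneg_left hF (by positivity : 0 ≤ U ^ 2 + U ^ 3)
  have hG' := mul_le_mul_of_nonneg_left hG
    (add_nonneg (pow_nonneg hU 3) (mul_nonneg (by linarith : 0 ≤ (1 + θ) / 2) (pow_nonneg hU 4)))
  linear_combination hF' + hG' + ((U + U ^ 2) * (δ - β * d)
    + (U * S + 1) * (β * l * (1 + U) + c * U + (1 + θ) / 2 * c * U ^ 2)) * hUS

lemma generator_rpow_le_of_bracket_le {θ U a e R : ℝ} (hθ : 0 ≤ θ) (hU : 0 < 1 + U)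
    (h : (1 + U) * a + (θ - 1) / 2 * e ≤ R) :
    θ * (1 + U) ^ (θ - 1) * a + 1 / 2 * θ * (θ - 1) * (1 + U) ^ (θ - 2) * e
      ≤ θ * (1 + U) ^ (θ - 2) * R := by
  have hpow : (1 + U) ^ (θ - 1) = (1 + U) ^ (θ - 2) * (1 + U) := by
    rw [← Real.rpow_add_one hU.ne']; congr 1; ring
  calc _ = θ * (1 + U) ^ (θ - 2) * ((1 + U) * a + (θ - 1) / 2 * e) := by rw [hpow]; ring
    _ ≤ _ := by gcongr

theorem generator_onePlusU_estimate_general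
    (N : ℕ) (hN : 1 ≤ N)
    (A : Matrix (Fin N) (Fin N) ℝ)
    (hA_symm : A.IsSymm)
    (hA_01 : ∀ i j, A i j = 0 ∨ A i j = 1)
    (lam1 : ℝ)
    (hlam1_max : ∀ (μ : ℝ) (v : Fin N → ℝ), v ≠ 0 → A.mulVec v = μ • v → μ ≤ lam1)
    (dmin : ℝ)
    (hdmin_le : ∀ i, dmin ≤ ∑ j, A i j)
    (β δ : ℝ) (hβ : 0 ≤ β)
    (M : ℝ)
    (σ : Fin N → ℝ → ℝ)
    (hσ : ∀ i, ∀ v ∈ Set.Ioo (0 : ℝ) 1, |σ i v| ≤ M * v)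
    (θ : ℝ) (hθ : θ ∈ Set.Ioo (0 : ℝ) 1)
    (x : Fin N → ℝ) (hx : ∀ i, x i ∈ Set.Ioo (0 : ℝ) 1)
    (U : ℝ) (hU : U = 1 / ∑ i, x i)
    (f g : Fin N → ℝ)
    (hf : ∀ i, f i = β * (∑ j, A i j * x j) * (1 - x i) - δ * x i)
    (hg : ∀ i, g i = σ i (x i) * (∑ j, A i j * x j) * (1 - x i)) :
    θ * (1 + U) ^ (θ - 1) * (-(U ^ 2) * (∑ i, f i) + U ^ 3 * ∑ i, (g i) ^ 2)
        + (1 / 2) * θ * (θ - 1) * (1 + U) ^ (θ - 2) * U ^ 4 * ∑ i, (g i) ^ 2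
      ≤ θ * (1 + U) ^ (θ - 2) *
          (-(β * dmin - δ - M ^ 2 / 32 * lam1 ^ 2 * (1 + θ)) * U ^ 2
            - (β * dmin - β * lam1 - δ - M ^ 2 / 16 * lam1 ^ 2) * U
            + β * lam1) := by
  have hA_herm : A.IsHermitian := isHermitian_iff_isSymm.mpr hA_symm
  have hA_nonneg : ∀ i j, 0 ≤ A i j := fun i j => by rcases hA_01 i j with h | h <;> simp [h]
  have hrayleigh : ∀ y, y ⬝ᵥ A *ᵥ y ≤ lam1 * (y ⬝ᵥ y) := hA_herm.dotProduct_mulVec_le fun i =>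
    hlam1_max _ _ (hA_herm.eigenvectorBasis_ne_zero i) (hA_herm.mulVec_eigenvectorBasis i)
  have habs : ∀ i, |hA_herm.eigenvalues i| ≤ lam1 := fun i =>
    abs_le_of_mulVec_eq_smul hA_nonneg hrayleigh (hA_herm.eigenvectorBasis_ne_zero i)
      (hA_herm.mulVec_eigenvectorBasis i)
  have hlam1 : 0 ≤ lam1 := (abs_nonneg _).trans (habs ⟨0, hN⟩)
  have hx0 : ∀ i, 0 ≤ x i := fun i => (hx i).1.le
  have hS : 0 < ∑ i, x i := Finset.sum_pos (fun i _ => (hx i).1) ⟨⟨0, hN⟩, Finset.mem_univ _⟩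
  have hU0 : 0 < U := by rw [hU]; positivity
  have hUS : U * ∑ i, x i = 1 := by rw [hU, one_div_mul_cancel hS.ne']
  have hF : (β * dmin - δ) * ∑ i, x i - β * lam1 * (∑ i, x i) ^ 2 ≤ ∑ i, f i := by
    simp only [hf]
    exact sum_drift_ge hA_symm hdmin_le hrayleigh hlam1 hβ hx0
  have hG : ∑ i, g i ^ 2 ≤ M ^ 2 / 16 * lam1 ^ 2 * (∑ i, x i) ^ 2 := by
    simp only [hg]
    exact sum_sq_diffusion_le hA_herm habs (fun i => Set.Ioo_subset_Icc_self (hx i))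
      fun i => hσ i _ (hx i)
  rw [mul_assoc _ (U ^ 4)]
  refine generator_rpow_le_of_bracket_le hθ.1.le (add_pos one_pos hU0) ?_
  exact (generator_bracket_le hU0.le (by linarith [hθ.1]) hUS hF hG).trans_eq (by ring)

/-- Inequality (L1u) in the proof of Lemma 4.1 (with the constant term `βλ₁` made explicit):
the generator applied to `(1 + U(x))^θ` in a fixed environmental state is bounded by
`θ(1+U)^{θ-2} ( -(β d_min - δ - (M²/32)λ₁²(1+θ)) U² - (β d_min - βλ₁ - δ - (M²/16)λ₁²) U + βλ₁ )`. -/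
theorem generator_onePlusU_estimate
    (N : ℕ) (hN : 1 ≤ N)
    (A : Matrix (Fin N) (Fin N) ℝ)
    (hA_symm : A.IsSymm)
    (hA_01 : ∀ i j, A i j = 0 ∨ A i j = 1)
    (hA_diag : ∀ i, A i i = 0)
    (lam1 : ℝ)
    (hlam1_eig : ∃ v : Fin N → ℝ, v ≠ 0 ∧ A.mulVec v = lam1 • v)
    (hlam1_max : ∀ (μ : ℝ) (v : Fin N → ℝ), v ≠ 0 → A.mulVec v = μ • v → μ ≤ lam1)
    (dmin : ℝ)
    (hdmin_le : ∀ i, dmin ≤ ∑ j, A i j)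
    (hdmin_mem : ∃ i, dmin = ∑ j, A i j)
    (β δ : ℝ) (hβ : 0 ≤ β) (hδ : 0 ≤ δ)
    (M : ℝ) (hM : 0 ≤ M)
    (σ : Fin N → ℝ → ℝ)
    (hσ : ∀ i, ∀ v ∈ Set.Ioo (0 : ℝ) 1, |σ i v| ≤ M * v)
    (θ : ℝ) (hθ : θ ∈ Set.Ioo (0 : ℝ) 1)
    (x : Fin N → ℝ) (hx : ∀ i, x i ∈ Set.Ioo (0 : ℝ) 1)
    (U : ℝ) (hU : U = 1 / ∑ i, x i)
    (f g : Fin N → ℝ)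
    (hf : ∀ i, f i = β * (∑ j, A i j * x j) * (1 - x i) - δ * x i)
    (hg : ∀ i, g i = σ i (x i) * (∑ j, A i j * x j) * (1 - x i)) :
    θ * (1 + U) ^ (θ - 1) * (-(U ^ 2) * (∑ i, f i) + U ^ 3 * ∑ i, (g i) ^ 2)
        + (1 / 2) * θ * (θ - 1) * (1 + U) ^ (θ - 2) * U ^ 4 * ∑ i, (g i) ^ 2
      ≤ θ * (1 + U) ^ (θ - 2) *
          (-(β * dmin - δ - M ^ 2 / 32 * lam1 ^ 2 * (1 + θ)) * U ^ 2
            - (β * dmin - β * lam1 - δ - M ^ 2 / 16 * lam1 ^ 2) * U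
            + β * lam1) :=
  generator_onePlusU_estimate_general N hN A hA_symm hA_01 lam1 hlam1_max dmin hdmin_le β δ hβ M σ
    hσ θ hθ x hx U hU f g hf hg
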